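/- arXiv:2402.02525 — 3 statements merged into one kernel-verified Lean document; each statement's English description precedes it below -/
import Mathlib

section
/- For every nonnegative integer k and positive integer n, the maximum size of a family F of subsets of [n] such that F does not contain k+1 pairwise disjoint pairs {F_i, F_i'} with F_i ∩ F_i' = ∅ (i.e., the Kneser cube on 2^[n] restricted to F contains no matching of size k+1) is exactly 2^(n-1) + k, provided 2^(n-1) + k ≤ 2^n. -/
/-- Adjacency in the Kneser cube: two distinct disjoint subsets of `[n]`. -/
def knAdj {n : ℕ} (A B : Finset (Fin n)) : Prop := A ≠ B ∧ Disjoint A B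

/-- The induced subgraph of the Kneser cube on `F` contains a matching with `m` edges. -/
def hasMatching {n : ℕ} (F : Finset (Finset (Fin n))) (m : ℕ) : Prop :=
  ∃ P : Finset (Finset (Fin n) × Finset (Fin n)),
    P.card = m ∧
    (∀ p ∈ P, p.1 ∈ F ∧ p.2 ∈ F ∧ knAdj p.1 p.2) ∧
    (∀ p ∈ P, ∀ q ∈ P, p ≠ q → p.1 ≠ q.1 ∧ p.1 ≠ q.2 ∧ p.2 ≠ q.1 ∧ p.2 ≠ q.2)

lemma card_filter_mem_aux (n : ℕ) (hn : 1 ≤ n) (x : Fin n) :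
    (Finset.univ.filter (fun A : Finset (Fin n) => x ∈ A)).card = 2 ^ (n - 1) := by
  classical
  set U := Finset.univ.filter (fun A : Finset (Fin n) => x ∈ A) with hU
  set V := Finset.univ.filter (fun A : Finset (Fin n) => x ∉ A) with hV
  have hcard : U.card = V.card := by
    apply Finset.card_bij (fun A _ => A.erase x)
    · intro A hA
      simp only [hV, Finset.mem_filter, Finset.mem_univ, true_and]
      exact Finset.notMem_erase x A
    · intro A hA B hB h
      simp only [hU, Finset.mem_filter, Finset.mem_univ, true_and] at hA hB
      have := congrArg (insert x) h
      rwa [Finset.insert_erase hA, Finset.insert_erase hB] at this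
    · intro B hB
      simp only [hV, Finset.mem_filter, Finset.mem_univ, true_and] at hB
      refine ⟨insert x B, ?_, ?_⟩
      · simp [hU]
      · exact Finset.erase_insert hB
  have hsum : U.card + V.card = 2 ^ n := by
    rw [hU, hV, Finset.card_filter_add_card_filter_not]
    simp [Finset.card_univ, Fintype.card_finset]
  have h2 : 2 * U.card = 2 * 2 ^ (n - 1) := by
    have : (2:ℕ) * 2 ^ (n-1) = 2 ^ n := by
      rw [← pow_succ']
      congr 1
      omega
    omega
  omega

/-- `vex(n, M_{k+1}) = 2^{n-1} + k`: the maximum size of a family of subsets of `[n]`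
inducing no matching of size `k+1` in the Kneser cube is exactly `2^(n-1) + k`. -/
theorem stmt_0 (n k : ℕ) (hn : 1 ≤ n) (hk : 2 ^ (n - 1) + k ≤ 2 ^ n) :
    (∀ F : Finset (Finset (Fin n)), ¬ hasMatching F (k + 1) → F.card ≤ 2 ^ (n - 1) + k) ∧
    (∃ F : Finset (Finset (Fin n)), ¬ hasMatching F (k + 1) ∧ F.card = 2 ^ (n - 1) + k) := by
  classical
  have hx : 0 < n := hn
  set x : Fin n := ⟨0, hx⟩
  have hUcard := card_filter_mem_aux n hn x
  constructor
  · -- upper bound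
    intro F hF
    by_contra hlt
    push_neg at hlt
    set A := F.filter (fun s => x ∈ s) with hA
    set B := F.filter (fun s => x ∉ s) with hB
    set T := B.image (fun s => sᶜ) with hT
    have hBT : B.card = T.card := by
      rw [hT, Finset.card_image_of_injective _ compl_injective]
    have hABF : A.card + B.card = F.card := by
      rw [hA, hB, Finset.card_filter_add_card_filter_not]
    have hsub : A ∪ T ⊆ Finset.univ.filter (fun s : Finset (Fin n) => x ∈ s) := by
      intro s hs
      simp only [Finset.mem_union] at hs
      simp only [Finset.mem_filter, Finset.mem_univ, true_and]
      rcases hs with hs | hs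
      · exact (Finset.mem_filter.mp hs).2
      · obtain ⟨t, ht, rfl⟩ := Finset.mem_image.mp hs
        have := (Finset.mem_filter.mp ht).2
        simpa using this
    have hkey : A.card + T.card = (A ∪ T).card + (A ∩ T).card :=
      (Finset.card_union_add_card_inter A T).symm
    have hUT : (A ∪ T).card ≤ 2 ^ (n - 1) := by
      rw [← hUcard]; exact Finset.card_le_card hsub
    have hS : k + 1 ≤ (A ∩ T).card := by omega
    obtain ⟨S', hS'sub, hS'card⟩ := Finset.exists_subset_card_eq hS
    -- properties of members of S'
    have hmem : ∀ s ∈ S', x ∈ s ∧ s ∈ F ∧ sᶜ ∈ F := by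
      intro s hs
      have hs' := hS'sub hs
      rw [Finset.mem_inter] at hs'
      obtain ⟨hsA, hsT⟩ := hs'
      rw [hA, Finset.mem_filter] at hsA
      obtain ⟨t, ht, rfl⟩ := Finset.mem_image.mp hsT
      rw [hB, Finset.mem_filter] at ht
      refine ⟨hsA.2, hsA.1, ?_⟩
      rw [compl_compl]; exact ht.1
    apply hF
    refine ⟨S'.image (fun s => (s, sᶜ)), ?_, ?_, ?_⟩
    · rw [Finset.card_image_of_injective _ (fun a b h => (Prod.mk.injEq _ _ _ _ ▸ h).1), hS'card]
    · intro p hp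
      obtain ⟨s, hs, rfl⟩ := Finset.mem_image.mp hp
      obtain ⟨hxs, hsF, hcF⟩ := hmem s hs
      refine ⟨hsF, hcF, ?_, disjoint_compl_right⟩
      intro h
      dsimp only at h
      have : x ∈ sᶜ := h ▸ hxs
      simp [hxs] at this
    · intro p hp q hq hpq
      obtain ⟨s, hs, rfl⟩ := Finset.mem_image.mp hp
      obtain ⟨t, ht, rfl⟩ := Finset.mem_image.mp hq
      obtain ⟨hxs, _, _⟩ := hmem s hs
      obtain ⟨hxt, _, _⟩ := hmem t ht
      have hst : s ≠ t := fun h => hpq (by rw [h])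
      refine ⟨hst, ?_, ?_, fun h => hst (compl_injective h)⟩
      · intro h; dsimp only at h; rw [h] at hxs; simp [hxt] at hxs
      · intro h; dsimp only at h; rw [← h] at hxt; simp [hxs] at hxt
  · -- construction
    set U := Finset.univ.filter (fun s : Finset (Fin n) => x ∈ s) with hU
    set V := Finset.univ.filter (fun s : Finset (Fin n) => x ∉ s) with hV
    have h2n : 2 ^ n = 2 * 2 ^ (n - 1) := by
      rw [← pow_succ']
      congr 1
      omega
    have hU' : U.card = 2 ^ (n - 1) := hUcard
    have hVcard : V.card = 2 ^ (n - 1) := by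
      have hsum : U.card + V.card = 2 ^ n := by
        rw [hU, hV, Finset.card_filter_add_card_filter_not]
        simp [Finset.card_univ, Fintype.card_finset]
      omega
    have hkV : k ≤ V.card := by omega
    obtain ⟨K, hKsub, hKcard⟩ := Finset.exists_subset_card_eq hkV
    refine ⟨U ∪ K, ?_, ?_⟩
    · rintro ⟨P, hPcard, hPedge, hPdisj⟩
      -- each edge has an endpoint in K; injective map
      have hpick : ∀ p ∈ P, (p.1 ∈ K ∧ x ∉ p.1) ∨ (p.2 ∈ K ∧ x ∉ p.2) := by
        intro p hp
        obtain ⟨h1, h2, _, hdisj⟩ := hPedge p hp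
        have hxK : ∀ s ∈ K, x ∉ s := by
          intro s hs
          have := hKsub hs
          rw [hV, Finset.mem_filter] at this
          exact this.2
        have hx1 : p.1 ∈ U ∨ p.1 ∈ K := Finset.mem_union.mp h1
        have hx2 : p.2 ∈ U ∨ p.2 ∈ K := Finset.mem_union.mp h2
        rcases hx1 with h | h
        · rcases hx2 with h' | h'
          · exfalso
            rw [hU, Finset.mem_filter] at h h'
            exact Finset.disjoint_left.mp hdisj h.2 h'.2
          · right; exact ⟨h', hxK _ h'⟩
        · left; exact ⟨h, hxK _ h⟩
      have hinj : Set.InjOn (fun p : Finset (Fin n) × Finset (Fin n) =>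
          if p.1 ∈ K ∧ x ∉ p.1 then p.1 else p.2) P := by
        intro p hp q hq h
        simp only at h
        by_contra hne
        obtain ⟨h1, h2, h3, h4⟩ := hPdisj p hp q hq hne
        split_ifs at h with c1 c2 c2
        · exact h1 h
        · exact h2 h
        · exact h3 h
        · exact h4 h
      have hmaps : ∀ p ∈ P, (if p.1 ∈ K ∧ x ∉ p.1 then p.1 else p.2) ∈ K := by
        intro p hp
        rcases hpick p hp with h | h
        · rw [if_pos h]; exact h.1
        · split_ifs with c
          · exact c.1
          · exact h.1
      have := Finset.card_le_card_of_injOn _ hmaps hinj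
      omega
    · have hdisj : Disjoint U K := by
        rw [Finset.disjoint_left]
        intro s hsU hsK
        rw [hU, Finset.mem_filter] at hsU
        have := hKsub hsK
        rw [hV, Finset.mem_filter] at this
        exact this.2 hsU.2
      rw [Finset.card_union_of_disjoint hdisj, hUcard, hKcard]
end

section
/- Let k ≥ 1 and let F_k = {F ⊆ [n] : |F| > kn/(2k+1)}. Then the induced subgraph of the Kneser cube on F_k contains no odd cycle C_{2k+1}; consequently 2^n - vex(n, C_{2k+1}) ≤ Σ_{i=0}^{⌊kn/(2k+1)⌋} C(n,i). -/
/-- The induced subgraph of the Kneser cube on the family `F` contains a copy of the graph `G`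
(as a subgraph). -/
def containsCopy {V : Type*} (G : SimpleGraph V) {n : ℕ} (F : Finset (Finset (Fin n))) : Prop :=
  ∃ f : V → Finset (Fin n), Function.Injective f ∧ (∀ v, f v ∈ F) ∧
    ∀ u v, G.Adj u v → knAdj (f u) (f v)

/-- `vex(n, G)`: the maximum size of a family `F ⊆ 2^[n]` such that the induced subgraph
of the Kneser cube on `F` is `G`-free. -/
noncomputable def vex (n : ℕ) {V : Type*} (G : SimpleGraph V) : ℕ :=
  sSup {m | ∃ F : Finset (Finset (Fin n)), ¬ containsCopy G F ∧ F.card = m}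

/-!
If each of the `2k+1` sets on a copy of `C_{2k+1}` has more than `kn/(2k+1)` elements, their sizes
sum to more than `kn`, so some point of `[n]` lies in at least `k+1` of them. Those sets pairwise
intersect, so they form an independent set of `C_{2k+1}`; but an independent set `S` of a cycle is
disjoint from its shift `S + 1`, hence has at most `k` elements. The family `F_k` is thus
`C_{2k+1}`-free, and its complement consists of the sets of size at most `⌊kn/(2k+1)⌋`.
-/

open Finset SimpleGraph

theorem SimpleGraph.two_mul_card_le_of_isIndepSet_cycleGraph {m : ℕ} (hm : 2 ≤ m)
    {s : Finset (Fin m)} (hs : (cycleGraph m).IsIndepSet (s : Set (Fin m))) :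
    2 * #s ≤ m := by
  have : NeZero m := ⟨by omega⟩
  have hsucc : ∀ u : Fin m, (cycleGraph m).Adj u (u + 1) := fun u => by
    rw [cycleGraph_adj', add_sub_cancel_left, Fin.val_one', Nat.mod_eq_of_lt hm]
    exact Or.inr rfl
  have hdisj : Disjoint s (s.image (· + 1)) := by
    rw [Finset.disjoint_right]
    rintro _ hv' hv
    obtain ⟨u, hu, rfl⟩ := mem_image.mp hv'
    exact hs hu hv (hsucc u).ne (hsucc u)
  calc 2 * #s = #(s ∪ s.image (· + 1)) := by
        rw [card_union_of_disjoint hdisj, card_image_of_injective _ (add_left_injective 1)]; ring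
    _ ≤ m := by simpa using card_le_univ (s ∪ s.image (· + 1))

theorem SimpleGraph.isIndepSet_setOf_mem {V α : Type*} {G : SimpleGraph V} {f : V → Finset α}
    (hf : ∀ u v, G.Adj u v → Disjoint (f u) (f v)) (a : α) : G.IsIndepSet {v | a ∈ f v} :=
  fun _ hu _ hv _ huv => Finset.disjoint_left.mp (hf _ _ huv) hu hv

theorem Finset.sum_card_eq_sum_card_filter_mem {ι α : Type*} [Fintype α] [DecidableEq α]
    (s : Finset ι) (f : ι → Finset α) : ∑ i ∈ s, #(f i) = ∑ a, #{i ∈ s | a ∈ f i} := by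
  simp only [card_eq_sum_ones, sum_filter]
  rw [sum_comm]
  simp

theorem Finset.exists_lt_card_filter_mem {ι α : Type*} [Fintype ι] [Fintype α] [DecidableEq α]
    (f : ι → Finset α) {k : ℕ} (h : Fintype.card α * k < ∑ i, #(f i)) :
    ∃ a, k < #{i | a ∈ f i} := by
  rw [sum_card_eq_sum_card_filter_mem] at h
  have hsum : ∑ _a : α, k < ∑ a, #{i | a ∈ f i} := by simpa [mul_comm] using h
  simpa using exists_lt_of_sum_lt hsum

theorem Finset.card_filter_card_le {α : Type*} [Fintype α] (t : ℕ) :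
    #{s : Finset α | #s ≤ t} = ∑ i ∈ range (t + 1), (Fintype.card α).choose i := by
  rw [card_eq_sum_card_fiberwise (f := card) (t := range (t + 1))
    fun s hs => mem_range.mpr (Nat.lt_succ_of_le (mem_filter.mp hs).2)]
  refine sum_congr rfl fun i hi => ?_
  have : ({s ∈ {s : Finset α | #s ≤ t} | #s = i} : Finset (Finset α)) = powersetCard i univ := by
    ext s
    simp only [mem_filter, mem_univ, true_and, mem_powersetCard, subset_univ]
    have := mem_range.mp hi
    omega
  rw [this, card_powersetCard, card_univ]

theorem card_le_vex {n : ℕ} {V : Type*} {G : SimpleGraph V} {F : Finset (Finset (Fin n))}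
    (hF : ¬ containsCopy G F) : #F ≤ vex n G := by
  refine le_csSup ⟨2 ^ n, ?_⟩ ⟨F, hF, rfl⟩
  rintro _ ⟨F', -, rfl⟩
  simpa using card_le_univ F'

theorem not_containsCopy_cycleGraph {k n : ℕ} (hk : 1 ≤ k) :
    ¬ containsCopy (cycleGraph (2 * k + 1))
        (univ.filter (fun F : Finset (Fin n) => k * n < (2 * k + 1) * #F)) := by
  rintro ⟨f, -, hmem, hadj⟩
  have hsum : Fintype.card (Fin n) * k < ∑ v, #(f v) := by
    have := sum_lt_sum_of_nonempty univ_nonempty fun v _ => (mem_filter.mp (hmem v)).2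
    rw [sum_const, card_univ, Fintype.card_fin, smul_eq_mul, ← mul_sum] at this
    rw [Fintype.card_fin, mul_comm]
    exact Nat.lt_of_mul_lt_mul_left this
  obtain ⟨x, hx⟩ := exists_lt_card_filter_mem f hsum
  have hindep := isIndepSet_setOf_mem (fun u v huv => (hadj u v huv).2) x
  have := two_mul_card_le_of_isIndepSet_cycleGraph (s := {v | x ∈ f v}) (by omega)
    (by simpa using hindep)
  omega

/-- For `k ≥ 1`, the family `F_k = {F ⊆ [n] : |F| > kn/(2k+1)}` induces no copy of the odd cycle
`C_{2k+1}` in the Kneser cube; consequently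
`2^n - vex(n, C_{2k+1}) ≤ ∑_{i=0}^{⌊kn/(2k+1)⌋} C(n,i)`. -/
theorem stmt_5 (k n : ℕ) (hk : 1 ≤ k) :
    ¬ containsCopy (SimpleGraph.cycleGraph (2 * k + 1))
        (Finset.univ.filter (fun F : Finset (Fin n) => k * n < (2 * k + 1) * F.card)) ∧
    2 ^ n - vex n (SimpleGraph.cycleGraph (2 * k + 1)) ≤
      ∑ i ∈ Finset.range (k * n / (2 * k + 1) + 1), n.choose i := by
  set large := univ.filter (fun F : Finset (Fin n) => k * n < (2 * k + 1) * #F)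
  have hfree : ¬ containsCopy (cycleGraph (2 * k + 1)) large := not_containsCopy_cycleGraph hk
  have hsmall : largeᶜ = univ.filter (fun F : Finset (Fin n) => #F ≤ k * n / (2 * k + 1)) := by
    ext F
    simp only [large, mem_compl, mem_filter, mem_univ, true_and, not_lt]
    rw [Nat.le_div_iff_mul_le (by omega), mul_comm]
  refine ⟨hfree, ?_⟩
  calc 2 ^ n - vex n (cycleGraph (2 * k + 1)) ≤ 2 ^ n - #large :=
        Nat.sub_le_sub_left (card_le_vex hfree) _
    _ = #largeᶜ := by simp [card_compl]
    _ = _ := by rw [hsmall, card_filter_card_le, Fintype.card_fin]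
end

section
/- Let G be a connected bipartite graph with parts A and B, and let F ⊆ 2^[n] be a family such that the induced subgraph of the Kneser cube on F contains no copy of G. Let F_sym = {S ∈ F : [n]\S ∈ F and n/2 - n^(2/3) ≤ |S| ≤ n/2 + n^(2/3)}. Then for n sufficiently large, F_sym contains no copy of the poset P_{G,A} (ordered by inclusion). -/
open Classical

/-- The family `F` contains a copy of the poset `P_{G,A}`: the poset whose Hasse diagram is the
bipartite graph `G`, with each edge oriented towards its endpoint in `A` (so an element of `B`
is below each of its neighbours in `A`). A copy is an injection `b` into `F` such that
for every edge `uv` of `G` with `v ∈ A` we have `b u ⊆ b v`. -/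
def copyPGA {V : Type*} (G : SimpleGraph V) (A : Set V) {n : ℕ}
    (F : Finset (Finset (Fin n))) : Prop :=
  ∃ b : V → Finset (Fin n), Function.Injective b ∧ (∀ v, b v ∈ F) ∧
    ∀ u v, G.Adj u v → v ∈ A → b u ⊆ b v

/-- Let `G` be a connected bipartite graph with parts `A`, `B`, and let `F ⊆ 2^[n]` induce a
`G`-free subgraph of the Kneser cube. Then, for `n` sufficiently large, the subfamily
`F_sym = {S ∈ F : [n]\S ∈ F, n/2 - n^{2/3} ≤ |S| ≤ n/2 + n^{2/3}}` contains no copy of the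
poset `P_{G,A}`. -/
theorem stmt_15 {V : Type*} [Fintype V] (G : SimpleGraph V) (hconn : G.Connected)
    (A B : Set V) (hcover : A ∪ B = Set.univ) (hdisj : Disjoint A B)
    (hedge : ∀ u v, G.Adj u v → ((u ∈ A ∧ v ∈ B) ∨ (u ∈ B ∧ v ∈ A))) :
    ∃ N : ℕ, ∀ n : ℕ, N ≤ n → ∀ F : Finset (Finset (Fin n)), ¬ containsCopy G F →
      ¬ copyPGA G A (F.filter (fun S =>
        Sᶜ ∈ F ∧ (n : ℝ) / 2 - (n : ℝ) ^ ((2 : ℝ) / 3) ≤ S.card ∧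
          (S.card : ℝ) ≤ (n : ℝ) / 2 + (n : ℝ) ^ ((2 : ℝ) / 3))) := by
  classical
  refine ⟨(4 * Fintype.card V + 3) ^ 3, ?_⟩
  intro n hn F hF hcopy
  obtain ⟨b, hbinj, hbmem, hble⟩ := hcopy
  set m := Fintype.card V with hm
  set c : ℝ := (n : ℝ) ^ ((2 : ℝ) / 3) with hcdef
  have hbF : ∀ v, b v ∈ F := fun v => (Finset.mem_filter.mp (hbmem v)).1
  have hbc : ∀ v, (b v)ᶜ ∈ F := fun v => ((Finset.mem_filter.mp (hbmem v)).2).1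
  have hlo : ∀ v, (n : ℝ) / 2 - c ≤ (b v).card :=
    fun v => ((Finset.mem_filter.mp (hbmem v)).2).2.1
  have hhi : ∀ v, ((b v).card : ℝ) ≤ (n : ℝ) / 2 + c :=
    fun v => ((Finset.mem_filter.mp (hbmem v)).2).2.2
  have hn0 : 0 < n := lt_of_lt_of_le (by positivity) hn
  have hc0 : (0 : ℝ) ≤ c := Real.rpow_nonneg (Nat.cast_nonneg n) _
  have hcpos : (0 : ℝ) < c := Real.rpow_pos_of_pos (by exact_mod_cast hn0) _
  have hcube : ((4 * m + 3 : ℝ)) ≤ (n : ℝ) ^ ((1 : ℝ) / 3) := by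
    have h1 : ((4 * m + 3 : ℝ)) ^ (3 : ℕ) ≤ (n : ℝ) := by
      have : ((4 * m + 3) ^ 3 : ℕ) ≤ n := hn
      exact_mod_cast this
    have h2 : (((4 * m + 3 : ℝ)) ^ (3 : ℕ)) ^ ((1 : ℝ) / 3) ≤ (n : ℝ) ^ ((1 : ℝ) / 3) :=
      Real.rpow_le_rpow (by positivity) h1 (by norm_num)
    calc (4 * m + 3 : ℝ) = (((4 * m + 3 : ℝ)) ^ (3 : ℕ)) ^ ((1 : ℝ) / 3) := by
          rw [← Real.rpow_natCast (4 * (m : ℝ) + 3) 3, ← Real.rpow_mul (by positivity)]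
          norm_num
      _ ≤ _ := h2
  have hkey : (4 * (m : ℝ) + 2) * c < n := by
    have hlt : (4 * (m : ℝ) + 2) * c < ((n : ℝ) ^ ((1 : ℝ) / 3)) * c := by
      apply mul_lt_mul_of_pos_right _ hcpos
      linarith
    have heq : ((n : ℝ) ^ ((1 : ℝ) / 3)) * c = n := by
      rw [hcdef, ← Real.rpow_add (by exact_mod_cast hn0)]
      norm_num
    linarith
  have hposcard : ∀ v, 0 < (b v).card := by
    intro v
    have h2c : 2 * c < (n : ℝ) := by nlinarith [Nat.cast_nonneg (α := ℝ) m]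
    have h3 : (0 : ℝ) < (b v).card := by have := hlo v; linarith
    exact_mod_cast h3
  have hcomp : ∀ x y, G.Adj x y → b x ⊆ b y ∨ b y ⊆ b x := by
    intro x y h
    rcases hedge x y h with ⟨hx, hy⟩ | ⟨hx, hy⟩
    · exact Or.inr (hble y x h.symm hx)
    · exact Or.inl (hble x y h hy)
  -- no "collision": b v ≠ (b u)ᶜ for u ∈ A, v ∈ B
  have hcol : ∀ u v, u ∈ A → v ∈ B → b v ≠ (b u)ᶜ := by
    intro u v huA hvB heq
    have key : ∀ (x z : V) (w : G.Walk x z),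
        ((b x ∩ b v).card : ℝ) ≤ ((b z ∩ b v).card : ℝ) + 2 * (w.length : ℝ) * c := by
      intro x z w
      induction w with
      | nil => simp
      | @cons x' y' z' h p ih =>
        rcases hcomp x' y' h with hxy | hyx
        · have hsub : (b x' ∩ b v).card ≤ (b y' ∩ b v).card :=
            Finset.card_le_card (Finset.inter_subset_inter hxy (le_refl _))
          have hsub' : ((b x' ∩ b v).card : ℝ) ≤ (b y' ∩ b v).card := by exact_mod_cast hsub
          simp only [SimpleGraph.Walk.length_cons]
          push_cast
          linarith
        · have hsub : b x' ∩ b v ⊆ (b y' ∩ b v) ∪ (b x' \ b y') := by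
            intro a ha
            simp only [Finset.mem_inter, Finset.mem_union, Finset.mem_sdiff] at *
            by_cases hay : a ∈ b y' <;> tauto
          have h1 : (b x' ∩ b v).card ≤ (b y' ∩ b v).card + (b x' \ b y').card :=
            le_trans (Finset.card_le_card hsub) (Finset.card_union_le _ _)
          have h2 : (b x' \ b y').card = (b x').card - (b y').card := Finset.card_sdiff_of_subset hyx
          have hle : (b y').card ≤ (b x').card := Finset.card_le_card hyx
          have h3 : ((b x' \ b y').card : ℝ) = ((b x').card : ℝ) - (b y').card := by
            rw [h2]; exact Nat.cast_sub hle
          have h4 : ((b x').card : ℝ) - (b y').card ≤ 2 * c := by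
            have := hhi x'; have := hlo y'; linarith
          have h5 : ((b x' ∩ b v).card : ℝ) ≤ ((b y' ∩ b v).card : ℝ) + 2 * c := by
            have hc1 : ((b x' ∩ b v).card : ℝ) ≤
                ((b y' ∩ b v).card : ℝ) + ((b x' \ b y').card : ℝ) := by exact_mod_cast h1
            linarith
          simp only [SimpleGraph.Walk.length_cons]
          push_cast
          linarith
    obtain ⟨w⟩ := hconn.preconnected v u
    set p := w.toPath with hp
    have hlen : (p : G.Walk v u).length < m := p.2.length_lt
    have hbase : b u ∩ b v = ∅ := by rw [heq, Finset.inter_compl]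
    have hmain := key v u (p : G.Walk v u)
    rw [Finset.inter_self, hbase] at hmain
    simp only [Finset.card_empty, Nat.cast_zero] at hmain
    have hlenR : (((p : G.Walk v u).length : ℝ)) ≤ m := by exact_mod_cast hlen.le
    have hstep : 2 * (((p : G.Walk v u).length : ℝ)) * c ≤ 2 * (m : ℝ) * c := by
      nlinarith
    have := hlo v
    linarith
  -- part facts
  have hnotA : ∀ v, v ∉ A → v ∈ B := by
    intro v hv
    have hvu : v ∈ A ∪ B := by rw [hcover]; exact Set.mem_univ v
    rcases hvu with h | h
    · exact absurd h hv
    · exact h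
  have hBnotA : ∀ v, v ∈ B → v ∉ A := fun v hv hva => Set.disjoint_left.mp hdisj hva hv
  -- build the copy of G
  apply hF
  refine ⟨fun v => if v ∈ A then (b v)ᶜ else b v, ?_, ?_, ?_⟩
  · intro x y hxy
    dsimp only at hxy
    by_cases hx : x ∈ A <;> by_cases hy : y ∈ A
    · rw [if_pos hx, if_pos hy] at hxy
      exact hbinj (compl_injective hxy)
    · rw [if_pos hx, if_neg hy] at hxy
      exact absurd hxy.symm (hcol x y hx (hnotA y hy))
    · rw [if_neg hx, if_pos hy] at hxy
      exact absurd hxy (hcol y x hy (hnotA x hx))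
    · rw [if_neg hx, if_neg hy] at hxy
      exact hbinj hxy
  · intro v
    dsimp only
    by_cases hv : v ∈ A
    · rw [if_pos hv]; exact hbc v
    · rw [if_neg hv]; exact hbF v
  · intro u v h
    dsimp only
    rcases hedge u v h with ⟨huA, hvB⟩ | ⟨huB, hvA⟩
    · rw [if_pos huA, if_neg (hBnotA v hvB)]
      have hsub : b v ⊆ b u := hble v u h.symm huA
      refine ⟨?_, ?_⟩
      · intro heq
        obtain ⟨a, ha⟩ := Finset.card_pos.mp (hposcard v)
        have ha1 : a ∈ b u := hsub ha
        have ha2 : a ∈ (b u)ᶜ := heq ▸ ha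
        exact (Finset.mem_compl.mp ha2) ha1
      · rw [Finset.disjoint_left]
        intro a ha hav
        exact (Finset.mem_compl.mp ha) (hsub hav)
    · rw [if_neg (hBnotA u huB), if_pos hvA]
      have hsub : b u ⊆ b v := hble u v h hvA
      refine ⟨?_, ?_⟩
      · intro heq
        obtain ⟨a, ha⟩ := Finset.card_pos.mp (hposcard u)
        have ha1 : a ∈ b v := hsub ha
        have ha2 : a ∈ (b v)ᶜ := heq ▸ ha
        exact (Finset.mem_compl.mp ha2) ha1
      · rw [Finset.disjoint_right]
        intro a ha hav
        exact (Finset.mem_compl.mp ha) (hsub hav)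
end
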